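/- For every n ≥ 1 of the form n = 2^m - 1, the denominator of E_n(x) - E_n(1) equals 2^{m-1}. -/

import Mathlib

/-!
Write `e n = E_n(0)`. The defining recursion gives `E_n(x) = ∑ C(n,i) e_{n-i} x^i` and
`E_n(1) = -e_n` for `n ≥ 1`, so `E_n(x) - E_n(1)` has constant coefficient `2 e_n` and
`i`-th coefficient `C(n,i) e_{n-i}` for `i ≥ 1`. The recursion also shows that every `e_s` is
`p`-integral for odd primes `p`. The identity `2/(e^t+1) = 2/(e^t-1) - 4/(e^{2t}-1)` gives
`(s+1) e_s = 2 (1 - 2^{s+1}) B_{s+1}`, and by von Staudt–Clausen `2 B_{2k}` is a `2`-adic unit,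
so `|(s+1) e_s|_2 ≤ 1` with equality for odd `s`. For `n = 2^m - 1` this makes
`|2 e_n|_2 = 2^{m-1}`, while `|e_s|_2 ≤ 2^{m-1}` for `s < n` because `s + 1 < 2^m`.
-/

open Polynomial Finset

/-- Euler polynomials `E n`, defined by the recursion
`E n = X^n - (1/2) * ∑_{k<n} (n choose k) • E k`, equivalent to the
generating function `2 e^{xt}/(e^t + 1) = ∑ E_n(x) t^n/n!`. -/
noncomputable def eulerPoly : ℕ → Polynomial ℚ :=
  WellFounded.fix Nat.lt_wfRel.wf fun n E =>
    Polynomial.X ^ n - (2⁻¹ : ℚ) • ∑ k : Fin n, ((n.choose k : ℚ)) • E k k.2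

theorem eulerPoly_eq (n : ℕ) :
    eulerPoly n = X ^ n - (2⁻¹ : ℚ) • ∑ k ∈ range n, (n.choose k : ℚ) • eulerPoly k := by
  conv_lhs => rw [eulerPoly, WellFounded.fix_eq]
  rw [← Fin.sum_univ_eq_sum_range (fun k => (n.choose k : ℚ) • eulerPoly k)]
  rfl

/-- `E_n(0)`, not the classical Euler number `2^n E_n(1/2)`. -/
noncomputable def eulerAtZero (n : ℕ) : ℚ := (eulerPoly n).eval 0

theorem sum_range_choose_mul_eulerAtZero (n : ℕ) :
    ∑ k ∈ range n, (n.choose k : ℚ) * eulerAtZero k =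
      2 * ((if n = 0 then 1 else 0) - eulerAtZero n) := by
  rw [eulerAtZero, eulerPoly_eq]
  simp [eval_finsetSum, zero_pow_eq, eulerAtZero]

theorem coeff_eulerPoly (n i : ℕ) :
    (eulerPoly n).coeff i = n.choose i * eulerAtZero (n - i) := by
  induction n using Nat.strong_induction_on generalizing i with | _ n ih =>
  rw [eulerPoly_eq, coeff_sub, coeff_smul, coeff_X_pow, finsetSum_coeff,
    sum_congr rfl fun k hk => by rw [coeff_smul, ih k (mem_range.1 hk)]]
  rcases lt_or_ge n i with hni | hin
  · have hvanish : ∀ k ∈ range n,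
        (n.choose k : ℚ) • ((k.choose i : ℚ) * eulerAtZero (k - i)) = 0 :=
      fun k hk => by simp [Nat.choose_eq_zero_of_lt ((mem_range.1 hk).trans hni)]
    rw [sum_eq_zero hvanish]
    simp [Nat.choose_eq_zero_of_lt hni, hni.ne']
  obtain ⟨s, rfl⟩ := Nat.exists_eq_add_of_le hin
  have hshift : ∑ k ∈ range (i + s),
        ((i + s).choose k : ℚ) • ((k.choose i : ℚ) * eulerAtZero (k - i))
      = (i + s).choose i * ∑ t ∈ range s, (s.choose t : ℚ) * eulerAtZero t := by
    rw [sum_range_add, sum_eq_zero fun k hk => by simp [Nat.choose_eq_zero_of_lt (mem_range.1 hk)],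
      zero_add, mul_sum]
    refine sum_congr rfl fun t _ => ?_
    have hchoose := Nat.choose_mul (n := i + s) (Nat.le_add_right i t)
    simp only [Nat.add_sub_cancel_left] at hchoose
    rw [smul_eq_mul, ← mul_assoc, ← Nat.cast_mul, hchoose, Nat.cast_mul, mul_assoc,
      Nat.add_sub_cancel_left]
  rw [hshift, sum_range_choose_mul_eulerAtZero, Nat.add_sub_cancel_left]
  rcases eq_or_ne s 0 with rfl | hs
  · simp
  · simp only [Nat.left_eq_add, hs, if_false, smul_eq_mul]
    ring

theorem natDegree_eulerPoly_le (n : ℕ) : (eulerPoly n).natDegree ≤ n :=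
  natDegree_le_iff_coeff_eq_zero.2 fun i hi => by
    rw [coeff_eulerPoly, Nat.choose_eq_zero_of_lt hi, Nat.cast_zero, zero_mul]

theorem eval_one_eulerPoly {n : ℕ} (hn : n ≠ 0) : (eulerPoly n).eval 1 = -eulerAtZero n := by
  rw [eval_eq_sum_range' (Nat.lt_succ_of_le (natDegree_eulerPoly_le n))]
  have hreflect : ∑ i ∈ range (n + 1), (eulerPoly n).coeff i * 1 ^ i
      = ∑ k ∈ range (n + 1), (n.choose k : ℚ) * eulerAtZero k := by
    rw [← sum_range_reflect]
    refine sum_congr rfl fun k hk => ?_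
    have hk : k ≤ n := Nat.lt_succ_iff.1 (mem_range.1 hk)
    rw [coeff_eulerPoly, one_pow, mul_one, Nat.add_sub_cancel, Nat.choose_symm hk,
      Nat.sub_sub_self hk]
  rw [hreflect, sum_range_succ, sum_range_choose_mul_eulerAtZero, if_neg hn, Nat.choose_self]
  ring

theorem eulerPoly_sub_C_eval_one {n : ℕ} (hn : n ≠ 0) :
    eulerPoly n - C ((eulerPoly n).eval 1) = eulerPoly n + C (eulerAtZero n) := by
  rw [eval_one_eulerPoly hn, map_neg, sub_neg_eq_add]

theorem coeff_eulerPoly_add_C (n i : ℕ) : (eulerPoly n + C (eulerAtZero n)).coeff i =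
    n.choose i * eulerAtZero (n - i) + if i = 0 then eulerAtZero n else 0 := by
  rw [coeff_add, coeff_eulerPoly, coeff_C]

section GeneratingFunction

open PowerSeries (exp coeff_exp coeff_mk rescale)

noncomputable def eulerAtZeroSeries : PowerSeries ℚ :=
  PowerSeries.mk fun n => eulerAtZero n / n.factorial

theorem eulerAtZeroSeries_mul_exp_add_one : eulerAtZeroSeries * (exp ℚ + 1) = 2 := by
  ext n
  have hconv : PowerSeries.coeff n (eulerAtZeroSeries * exp ℚ)
      = (∑ k ∈ range (n + 1), (n.choose k : ℚ) * eulerAtZero k) / n.factorial := by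
    rw [PowerSeries.coeff_mul, Nat.sum_antidiagonal_eq_sum_range_succ_mk, sum_div]
    refine sum_congr rfl fun k hk => ?_
    have hk : k ≤ n := Nat.lt_succ_iff.1 (mem_range.1 hk)
    rw [eulerAtZeroSeries, coeff_mk, coeff_exp, Nat.cast_choose ℚ hk, map_div₀, map_one,
      eq_ratCast, Rat.cast_id]
    field_simp
  rw [← map_ofNat PowerSeries.C 2, PowerSeries.coeff_C, mul_add, mul_one, map_add, hconv,
    sum_range_succ, sum_range_choose_mul_eulerAtZero, Nat.choose_self, eulerAtZeroSeries, coeff_mk]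
  rcases eq_or_ne n 0 with rfl | hn
  · norm_num
    ring
  · simp only [hn, if_false]
    ring

theorem X_mul_eulerAtZeroSeries : PowerSeries.X * eulerAtZeroSeries =
    2 * bernoulliPowerSeries ℚ - 2 * rescale 2 (bernoulliPowerSeries ℚ) := by
  have hexp : exp ℚ ^ 2 = rescale 2 (exp ℚ) := by
    simpa using PowerSeries.exp_pow_eq_rescale_exp (A := ℚ) 2
  have hB := bernoulliPowerSeries_mul_exp_sub_one ℚ
  have hB2 : rescale 2 (bernoulliPowerSeries ℚ) * (exp ℚ ^ 2 - 1) = 2 * PowerSeries.X := by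
    simpa [hexp, PowerSeries.rescale_X, ← map_ofNat PowerSeries.C 2]
      using congrArg (rescale (2 : ℚ)) hB
  have hne : exp ℚ ^ 2 - 1 ≠ 0 := fun h => by
    simpa [hexp, PowerSeries.coeff_rescale] using congrArg (PowerSeries.coeff 1) h
  refine mul_right_cancel₀ hne ?_
  linear_combination (PowerSeries.X * (exp ℚ - 1)) * eulerAtZeroSeries_mul_exp_add_one
    - 2 * (exp ℚ + 1) * hB + 2 * hB2

theorem succ_mul_eulerAtZero (n : ℕ) :
    (n + 1 : ℚ) * eulerAtZero n = 2 * (1 - 2 ^ (n + 1)) * _root_.bernoulli (n + 1) := by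
  have h := congrArg (PowerSeries.coeff (n + 1)) X_mul_eulerAtZeroSeries
  simp only [PowerSeries.coeff_succ_X_mul, eulerAtZeroSeries, bernoulliPowerSeries, coeff_mk,
    map_sub, ← map_ofNat PowerSeries.C 2, PowerSeries.coeff_C_mul, PowerSeries.coeff_rescale,
    Algebra.algebraMap_self, RingHom.id_apply, Nat.factorial_succ, Nat.cast_mul,
    Nat.cast_succ] at h
  norm_num at h
  field_simp at h
  linear_combination h

end GeneratingFunction

theorem padicNorm_two_two : padicNorm 2 (2 : ℚ) = 2⁻¹ := by
  simpa using padicNorm.padicNorm_p_of_prime (p := 2)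

theorem padicNorm_two_two_pow (k : ℕ) : padicNorm 2 ((2 : ℚ) ^ k) = (2 ^ k)⁻¹ := by
  rw [IsAbsoluteValue.abv_pow (padicNorm 2), padicNorm_two_two, inv_pow]

theorem padicNorm_two_two_mul_le {q : ℚ} (hq : padicNorm 2 q ≤ 1) :
    padicNorm 2 (2 * q) ≤ 2⁻¹ := by
  rw [padicNorm.mul, padicNorm_two_two]
  exact mul_le_of_le_one_right (by norm_num) hq

theorem padicNorm_two_one_add_eq_one {q : ℚ} (hq : padicNorm 2 q < 1) :
    padicNorm 2 (1 + q) = 1 := by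
  rw [padicNorm.add_eq_max_of_ne (by rw [padicNorm.one]; exact hq.ne'), padicNorm.one,
    max_eq_left hq.le]

theorem padicNorm_two_one_sub_two_pow {k : ℕ} (hk : k ≠ 0) :
    padicNorm 2 (1 - 2 ^ k : ℚ) = 1 := by
  rw [sub_eq_add_neg]
  apply padicNorm_two_one_add_eq_one
  rw [padicNorm.neg, padicNorm_two_two_pow]
  exact inv_lt_one_of_one_lt₀ (one_lt_pow₀ (by norm_num) hk)

theorem padicNorm_two_two_mul_bernoulli_two_mul {k : ℕ} (hk : k ≠ 0) :
    padicNorm 2 (2 * _root_.bernoulli (2 * k)) = 1 := by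
  obtain ⟨N, hN⟩ := Bernoulli.vonStaudt_clausen k
  set S := (range (2 * k + 2)).filter fun p => p.Prime ∧ (p - 1) ∣ 2 * k
  have h2S : 2 ∈ S := by
    simp only [S, mem_filter, mem_range]
    exact ⟨by omega, Nat.prime_two, by simp⟩
  have hodd : padicNorm 2 (∑ p ∈ S.erase 2, (1 : ℚ) / p) ≤ 1 := by
    refine padicNorm.sum_le' (fun p hp => ?_) zero_le_one
    obtain ⟨hp2, hp⟩ := mem_erase.1 hp
    have : Fact p.Prime := ⟨(mem_filter.1 hp).2.1⟩
    rw [padicNorm.div, padicNorm.one, padicNorm.padicNorm_of_prime_of_ne hp2.symm]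
    norm_num
  rw [← add_sum_erase S _ h2S] at hN
  have hunit : 2 * _root_.bernoulli (2 * k) =
      -1 + (2 * N - 2 * ∑ p ∈ S.erase 2, (1 : ℚ) / p) := by
    rw [hN]
    ring
  rw [hunit, ← padicNorm.neg, neg_add, neg_neg]
  apply padicNorm_two_one_add_eq_one
  rw [padicNorm.neg]
  exact padicNorm.sub.trans_lt (max_lt
    ((padicNorm_two_two_mul_le (padicNorm.of_int N)).trans_lt (by norm_num))
    ((padicNorm_two_two_mul_le hodd).trans_lt (by norm_num)))

theorem padicNorm_two_two_mul_bernoulli_le (n : ℕ) :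
    padicNorm 2 (2 * _root_.bernoulli n) ≤ 1 := by
  rcases Nat.even_or_odd n with ⟨k, rfl⟩ | hodd
  · rcases eq_or_ne k 0 with rfl | hk
    · rw [_root_.bernoulli_zero, mul_one, padicNorm_two_two]
      norm_num
    · rw [← two_mul, padicNorm_two_two_mul_bernoulli_two_mul hk]
  · rcases eq_or_ne n 1 with rfl | hn
    · rw [_root_.bernoulli_one, show (2 : ℚ) * (-1 / 2) = -1 by norm_num, padicNorm.neg,
        padicNorm.one]
    · have h1n : 1 < n := by obtain ⟨j, rfl⟩ := hodd; omega
      rw [bernoulli_eq_zero_of_odd hodd h1n, mul_zero, padicNorm.zero]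
      exact zero_le_one

theorem padicNorm_two_succ_mul_eulerAtZero_le (n : ℕ) :
    padicNorm 2 ((n + 1) * eulerAtZero n) ≤ 1 := by
  rw [succ_mul_eulerAtZero, mul_right_comm, padicNorm.mul,
    padicNorm_two_one_sub_two_pow n.succ_ne_zero, mul_one]
  exact padicNorm_two_two_mul_bernoulli_le _

theorem padicNorm_two_succ_mul_eulerAtZero_of_odd {n : ℕ} (hn : Odd n) :
    padicNorm 2 ((n + 1) * eulerAtZero n) = 1 := by
  obtain ⟨k, rfl⟩ := hn
  rw [succ_mul_eulerAtZero, mul_right_comm, padicNorm.mul,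
    padicNorm_two_one_sub_two_pow (Nat.succ_ne_zero _), mul_one,
    show 2 * k + 1 + 1 = 2 * (k + 1) by ring,
    padicNorm_two_two_mul_bernoulli_two_mul k.succ_ne_zero]

theorem padicNorm_eulerAtZero_le_one {p : ℕ} [Fact p.Prime] (hp : p ≠ 2) (n : ℕ) :
    padicNorm p (eulerAtZero n) ≤ 1 := by
  induction n using Nat.strong_induction_on with | _ n ih =>
  have hrec : eulerAtZero n =
      (if n = 0 then 1 else 0) - 2⁻¹ * ∑ k ∈ range n, (n.choose k : ℚ) * eulerAtZero k := by
    rw [sum_range_choose_mul_eulerAtZero]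
    ring
  have htwo : padicNorm p (2⁻¹ : ℚ) = 1 := by
    rw [← one_div, padicNorm.div, padicNorm.one, show (2 : ℚ) = (2 : ℕ) by norm_num,
      padicNorm.padicNorm_of_prime_of_ne hp, div_one]
  rw [hrec]
  refine padicNorm.sub.trans (max_le ?_ ?_)
  · split_ifs <;> simp
  · rw [padicNorm.mul, htwo, one_mul]
    refine padicNorm.sum_le' (fun k hk => ?_) zero_le_one
    rw [padicNorm.mul]
    exact mul_le_one₀ (padicNorm.of_nat _) (padicNorm.nonneg _) (ih k (mem_range.1 hk))

theorem padicNorm_coeff_eulerPoly_add_C_le_one {p : ℕ} [Fact p.Prime] (hp : p ≠ 2) (n i : ℕ) :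
    padicNorm p ((eulerPoly n + C (eulerAtZero n)).coeff i) ≤ 1 := by
  rw [coeff_eulerPoly_add_C]
  refine padicNorm.nonarchimedean.trans (max_le ?_ ?_)
  · rw [padicNorm.mul]
    exact mul_le_one₀ (padicNorm.of_nat _) (padicNorm.nonneg _)
      (padicNorm_eulerAtZero_le_one hp _)
  · split_ifs
    exacts [padicNorm_eulerAtZero_le_one hp _, by simp]

theorem inv_two_pow_le_padicNorm_two {a k : ℕ} (ha : a ≠ 0) (h : a < 2 ^ (k + 1)) :
    (2 ^ k : ℚ)⁻¹ ≤ padicNorm 2 a := by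
  have hv : padicValNat 2 a ≤ k := by
    have := (Nat.le_of_dvd (Nat.pos_of_ne_zero ha) (pow_padicValNat_dvd (p := 2))).trans_lt h
    exact Nat.lt_succ_iff.1 ((Nat.pow_lt_pow_iff_right (by norm_num)).1 this)
  rw [padicNorm.eq_zpow_of_nonzero (Nat.cast_ne_zero.2 ha), padicValRat.of_nat, ← zpow_natCast,
    ← zpow_neg, Nat.cast_ofNat]
  exact zpow_le_zpow_right₀ (by norm_num) (by omega)

theorem padicNorm_two_eulerAtZero_le {s k : ℕ} (hs : s + 1 < 2 ^ (k + 1)) :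
    padicNorm 2 (eulerAtZero s) ≤ 2 ^ k := by
  have hprod := padicNorm_two_succ_mul_eulerAtZero_le s
  have hlow := inv_two_pow_le_padicNorm_two s.succ_ne_zero hs
  rw [padicNorm.mul] at hprod
  push_cast at hlow
  calc padicNorm 2 (eulerAtZero s)
      = 2 ^ k * ((2 ^ k)⁻¹ * padicNorm 2 (eulerAtZero s)) := by field_simp
    _ ≤ 2 ^ k * (padicNorm 2 (s + 1) * padicNorm 2 (eulerAtZero s)) :=
        mul_le_mul_of_nonneg_left (mul_le_mul_of_nonneg_right hlow (padicNorm.nonneg _))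
          (by positivity)
    _ ≤ 2 ^ k := mul_le_of_le_one_right (by positivity) hprod

theorem padicNorm_two_two_mul_eulerAtZero {n k : ℕ} (hn : n + 1 = 2 ^ (k + 1)) :
    padicNorm 2 (2 * eulerAtZero n) = 2 ^ k := by
  have hodd : Odd n := ⟨2 ^ k - 1, by rw [pow_succ] at hn; have := k.one_le_two_pow; omega⟩
  have h := padicNorm_two_succ_mul_eulerAtZero_of_odd hodd
  have hn' : (n : ℚ) + 1 = 2 ^ k * 2 := by
    rw [← pow_succ]
    exact_mod_cast hn
  rw [hn', mul_assoc, padicNorm.mul, padicNorm_two_two_pow] at h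
  field_simp at h
  linarith

theorem Rat.den_eq_one_of_padicNorm_le_one {q : ℚ}
    (h : ∀ p : ℕ, p.Prime → padicNorm p q ≤ 1) : q.den = 1 := by
  by_contra hden
  obtain ⟨p, hp, hpden⟩ := Nat.exists_prime_and_dvd hden
  have : Fact p.Prime := ⟨hp⟩
  have hnum : padicNorm p q.num = 1 := (padicNorm.int_eq_one_iff _).2 fun hpnum =>
    hp.one_lt.ne' (Nat.eq_one_of_dvd_coprimes q.reduced (Int.natCast_dvd.1 hpnum) hpden)
  have hden_lt : padicNorm p q.den < 1 := (padicNorm.nat_lt_one_iff _).2 hpden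
  have hden_pos : 0 < padicNorm p q.den :=
    (padicNorm.nonneg _).lt_of_ne' (padicNorm.nonzero (Nat.cast_ne_zero.2 q.den_nz))
  have hq := h p hp
  rw [← Rat.num_div_den q, padicNorm.div, hnum, div_le_one hden_pos] at hq
  linarith

theorem isLeast_commonDenominator_of_padicNorm {ι : Type*} {c : ι → ℚ} {k : ℕ}
    (hodd : ∀ p, p.Prime → p ≠ 2 → ∀ i, padicNorm p (c i) ≤ 1)
    (htwo : ∀ i, padicNorm 2 (c i) ≤ 2 ^ k) {i₀ : ι} (hi₀ : padicNorm 2 (c i₀) = 2 ^ k) :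
    IsLeast {D : ℕ | 0 < D ∧ ∀ i, ((D : ℚ) * c i).den = 1} (2 ^ k) := by
  refine ⟨⟨by positivity, fun i => Rat.den_eq_one_of_padicNorm_le_one fun p hp => ?_⟩, ?_⟩
  · have : Fact p.Prime := ⟨hp⟩
    rw [padicNorm.mul]
    rcases eq_or_ne p 2 with rfl | hp2
    · push_cast
      rw [padicNorm_two_two_pow, inv_mul_le_iff₀ (by positivity), mul_one]
      exact htwo i
    · exact mul_le_one₀ (padicNorm.of_nat _) (padicNorm.nonneg _) (hodd p hp hp2 i)
  · rintro D ⟨hD, hDc⟩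
    have hint : padicNorm 2 ((D : ℚ) * c i₀) ≤ 1 := by
      rw [← Rat.coe_int_num_of_den_eq_one (hDc i₀)]
      exact padicNorm.of_int _
    rw [padicNorm.mul, hi₀, ← le_div_iff₀ (by positivity), one_div] at hint
    have hdvd : ((2 ^ k : ℕ) : ℤ) ∣ (D : ℤ) := padicNorm.dvd_iff_norm_le.2 (by
      rw [zpow_neg, zpow_natCast]
      exact_mod_cast hint)
    exact Nat.le_of_dvd hD (Int.natCast_dvd_natCast.1 hdvd)

theorem stmt_18 (m n : ℕ) (hm : 1 ≤ m) (hn : n = 2 ^ m - 1) :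
    IsLeast {D : ℕ | 0 < D ∧ ∀ i : ℕ,
        ((D : ℚ) * (eulerPoly n - Polynomial.C ((eulerPoly n).eval 1)).coeff i).den = 1}
      (2 ^ (m - 1)) := by
  obtain ⟨k, rfl⟩ : ∃ k, m = k + 1 := ⟨m - 1, by omega⟩
  have hn1 : n + 1 = 2 ^ (k + 1) := by have := (k + 1).one_le_two_pow; omega
  have hn0 : n ≠ 0 := by rw [pow_succ] at hn1; have := k.one_le_two_pow; omega
  have hcoeff_zero : padicNorm 2 ((eulerPoly n + C (eulerAtZero n)).coeff 0) = 2 ^ k := by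
    rw [coeff_eulerPoly_add_C, if_pos rfl, Nat.choose_zero_right, Nat.sub_zero, Nat.cast_one,
      one_mul, ← two_mul, padicNorm_two_two_mul_eulerAtZero hn1]
  rw [Nat.add_sub_cancel, eulerPoly_sub_C_eval_one hn0]
  refine isLeast_commonDenominator_of_padicNorm (fun p hp hp2 i => ?_) (fun i => ?_) hcoeff_zero
  · have : Fact p.Prime := ⟨hp⟩
    exact padicNorm_coeff_eulerPoly_add_C_le_one hp2 n i
  · rcases eq_or_ne i 0 with rfl | hi
    · exact hcoeff_zero.le
    · rw [coeff_eulerPoly_add_C, if_neg hi, add_zero, padicNorm.mul]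
      exact (mul_le_of_le_one_left (padicNorm.nonneg _) (padicNorm.of_nat _)).trans
        (padicNorm_two_eulerAtZero_le (by omega))
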